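/- Let n ≥ 1 and let c : ℝⁿ → ℝ and u, ψ, β, α₁, q₁, F₁ : ℝ × ℝⁿ → ℝ all be smooth. For smooth damping coefficients α, q define the operator P_{α,q} acting on smooth w : ℝ × ℝⁿ → ℝ by P_{α,q} w = ∂ₜ³w + α ∂ₜ²w − Δ(∂ₜ w) − c² Δw + q ∂ₜ w, where Δw = Σ_{i=1}^n ∂²w/∂x_i² is the spatial Laplacian. Suppose u satisfies the JMGT equation P_{α₁,q₁} u = ∂ₜ( β (∂ₜu)² ) + F₁ on ℝ × ℝⁿ. Define α₂ = α₁ + 2β ∂ₜψ, q₂ = q₁ + 2 ∂ₜ(β ∂ₜψ), and F₂ = F₁ + ∂ₜ³ψ + α₁ ∂ₜ²ψ − Δ(∂ₜψ) − c² Δψ + q₁ ∂ₜψ + ∂ₜ( β (∂ₜψ)² ). Then u + ψ satisfies P_{α₂,q₂}(u + ψ) = ∂ₜ( β (∂ₜ(u+ψ))² ) + F₂ on ℝ × ℝⁿ. -/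

import Mathlib

open MeasureTheory

/-- Partial derivative in the time variable of a function on `ℝ × ℝⁿ`. -/
noncomputable def pdt {E : Type*} [NormedAddCommGroup E] [NormedSpace ℝ E]
    {n : ℕ} (v : ℝ × (Fin n → ℝ) → E) : ℝ × (Fin n → ℝ) → E :=
  fun p => deriv (fun t => v (t, p.2)) p.1

/-- Partial derivative in the `i`-th spatial variable of a function on `ℝ × ℝⁿ`. -/
noncomputable def pdx {E : Type*} [NormedAddCommGroup E] [NormedSpace ℝ E]
    {n : ℕ} (i : Fin n) (v : ℝ × (Fin n → ℝ) → E) : ℝ × (Fin n → ℝ) → E :=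
  fun p => deriv (fun y => v (p.1, Function.update p.2 i y)) (p.2 i)

/-- Spatial Laplacian `Δw = Σᵢ ∂²w/∂xᵢ²` of a function on `ℝ × ℝⁿ`. -/
noncomputable def lapx {E : Type*} [NormedAddCommGroup E] [NormedSpace ℝ E]
    {n : ℕ} (v : ℝ × (Fin n → ℝ) → E) : ℝ × (Fin n → ℝ) → E :=
  fun p => ∑ i, pdx i (pdx i v) p

/-- The MGT operator `P_{α,q} w = ∂ₜ³w + α ∂ₜ²w − Δ∂ₜw − c²Δw + q ∂ₜw`. -/
noncomputable def Pop {n : ℕ} (α q : ℝ × (Fin n → ℝ) → ℝ) (c : (Fin n → ℝ) → ℝ)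
    (w : ℝ × (Fin n → ℝ) → ℝ) : ℝ × (Fin n → ℝ) → ℝ :=
  fun p => pdt (pdt (pdt w)) p + α p * pdt (pdt w) p - lapx (pdt w) p
    - (c p.2) ^ 2 * lapx w p + q p * pdt w p

variable {n : ℕ}

lemma slice_t_contDiff (v : ℝ × (Fin n → ℝ) → ℝ) (hv : ContDiff ℝ (⊤ : ℕ∞) v) (x : Fin n → ℝ) :
    ContDiff ℝ (⊤ : ℕ∞) (fun t => v (t, x)) :=
  hv.comp (contDiff_id.prodMk contDiff_const)

lemma slice_x_contDiff (v : ℝ × (Fin n → ℝ) → ℝ) (hv : ContDiff ℝ (⊤ : ℕ∞) v)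
    (t : ℝ) (x : Fin n → ℝ) (i : Fin n) :
    ContDiff ℝ (⊤ : ℕ∞) (fun y => v (t, Function.update x i y)) :=
  hv.comp (contDiff_const.prodMk (contDiff_update _ x i))

lemma pdt_eq (v : ℝ × (Fin n → ℝ) → ℝ) (hv : ContDiff ℝ (⊤ : ℕ∞) v) (p : ℝ × (Fin n → ℝ)) :
    pdt v p = fderiv ℝ v p ((1 : ℝ), (0 : Fin n → ℝ)) := by
  have h1 : HasFDerivAt v (fderiv ℝ v p) p :=
    (hv.differentiable (by simp) p).hasFDerivAt
  have h2 : HasDerivAt (fun t : ℝ => (t, p.2)) ((1 : ℝ), (0 : Fin n → ℝ)) p.1 :=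
    (hasDerivAt_id p.1).prodMk (hasDerivAt_const _ _)
  have h3 : HasDerivAt (fun t => v (t, p.2)) (fderiv ℝ v p ((1:ℝ), (0 : Fin n → ℝ))) p.1 := by
    exact h1.comp_hasDerivAt p.1 h2
  exact h3.deriv

lemma pdt_contDiff (v : ℝ × (Fin n → ℝ) → ℝ) (hv : ContDiff ℝ (⊤ : ℕ∞) v) :
    ContDiff ℝ (⊤ : ℕ∞) (pdt v) := by
  have : pdt v = fun p => (fderiv ℝ v p) ((1 : ℝ), (0 : Fin n → ℝ)) :=
    funext (pdt_eq v hv)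
  rw [this]
  exact (ContinuousLinearMap.apply ℝ ℝ ((1:ℝ), (0 : Fin n → ℝ))).contDiff.comp
    (hv.fderiv_right (by simp))

lemma pdx_eq (i : Fin n) (v : ℝ × (Fin n → ℝ) → ℝ) (hv : ContDiff ℝ (⊤ : ℕ∞) v)
    (p : ℝ × (Fin n → ℝ)) :
    pdx i v p = fderiv ℝ v p ((0 : ℝ), Pi.single i (1 : ℝ)) := by
  have h1 : HasFDerivAt v (fderiv ℝ v p) p :=
    (hv.differentiable (by simp) p).hasFDerivAt
  have h2 : HasDerivAt (fun y : ℝ => (p.1, Function.update p.2 i y))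
      ((0 : ℝ), Pi.single i (1 : ℝ)) (p.2 i) :=
    (hasDerivAt_const _ _).prodMk (hasDerivAt_update p.2 i (p.2 i))
  have h1' : HasFDerivAt v (fderiv ℝ v p) (p.1, Function.update p.2 i (p.2 i)) := by
    rw [Function.update_eq_self]; exact h1
  have h3 : HasDerivAt (fun y => v (p.1, Function.update p.2 i y))
      (fderiv ℝ v p ((0:ℝ), Pi.single i (1:ℝ))) (p.2 i) := by
    exact h1'.comp_hasDerivAt (p.2 i) h2
  exact h3.deriv

lemma pdx_contDiff (i : Fin n) (v : ℝ × (Fin n → ℝ) → ℝ) (hv : ContDiff ℝ (⊤ : ℕ∞) v) :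
    ContDiff ℝ (⊤ : ℕ∞) (pdx i v) := by
  have : pdx i v = fun p => (fderiv ℝ v p) ((0 : ℝ), Pi.single i (1 : ℝ)) :=
    funext (pdx_eq i v hv)
  rw [this]
  exact (ContinuousLinearMap.apply ℝ ℝ ((0:ℝ), Pi.single i (1:ℝ))).contDiff.comp
    (hv.fderiv_right (m := ((⊤ : ℕ∞) : WithTop ℕ∞)) (by simp))

lemma pdt_add (f g : ℝ × (Fin n → ℝ) → ℝ) (hf : ContDiff ℝ (⊤ : ℕ∞) f) (hg : ContDiff ℝ (⊤ : ℕ∞) g) :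
    pdt (fun p => f p + g p) = fun p => pdt f p + pdt g p := by
  funext p
  exact deriv_fun_add ((slice_t_contDiff f hf p.2).differentiable (by simp)).differentiableAt
    ((slice_t_contDiff g hg p.2).differentiable (by simp)).differentiableAt

lemma pdt_mul (f g : ℝ × (Fin n → ℝ) → ℝ) (hf : ContDiff ℝ (⊤ : ℕ∞) f) (hg : ContDiff ℝ (⊤ : ℕ∞) g)
    (p : ℝ × (Fin n → ℝ)) :
    pdt (fun q => f q * g q) p = pdt f p * g p + f p * pdt g p :=
  deriv_fun_mul ((slice_t_contDiff f hf p.2).differentiable (by simp)).differentiableAt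
    ((slice_t_contDiff g hg p.2).differentiable (by simp)).differentiableAt

lemma pdx_add (i : Fin n) (f g : ℝ × (Fin n → ℝ) → ℝ)
    (hf : ContDiff ℝ (⊤ : ℕ∞) f) (hg : ContDiff ℝ (⊤ : ℕ∞) g) :
    pdx i (fun p => f p + g p) = fun p => pdx i f p + pdx i g p := by
  funext p
  exact deriv_fun_add
    ((slice_x_contDiff f hf p.1 p.2 i).differentiable (by simp)).differentiableAt
    ((slice_x_contDiff g hg p.1 p.2 i).differentiable (by simp)).differentiableAt

lemma lapx_add (f g : ℝ × (Fin n → ℝ) → ℝ) (hf : ContDiff ℝ (⊤ : ℕ∞) f) (hg : ContDiff ℝ (⊤ : ℕ∞) g)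
    (p : ℝ × (Fin n → ℝ)) :
    lapx (fun p => f p + g p) p = lapx f p + lapx g p := by
  unfold lapx
  rw [← Finset.sum_add_distrib]
  refine Finset.sum_congr rfl fun i _ => ?_
  rw [pdx_add i f g hf hg, pdx_add i (pdx i f) (pdx i g) (pdx_contDiff i f hf) (pdx_contDiff i g hg)]


lemma pdt_add' (f g : ℝ × (Fin n → ℝ) → ℝ) (hf : ContDiff ℝ (⊤ : ℕ∞) f) (hg : ContDiff ℝ (⊤ : ℕ∞) g)
    (p : ℝ × (Fin n → ℝ)) :
    pdt (fun q => f q + g q) p = pdt f p + pdt g p :=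
  congrFun (pdt_add f g hf hg) p

/-- Gauge symmetry of the JMGT equation: if `u` solves
`P_{α₁,q₁} u = ∂ₜ(β (∂ₜu)²) + F₁`, then `u + ψ` solves the JMGT equation with
coefficients `α₂ = α₁ + 2β∂ₜψ`, `q₂ = q₁ + 2∂ₜ(β∂ₜψ)` and source
`F₂ = F₁ + ∂ₜ³ψ + α₁∂ₜ²ψ − Δ∂ₜψ − c²Δψ + q₁∂ₜψ + ∂ₜ(β(∂ₜψ)²)`. -/
theorem jmgt_gauge_symmetry
    (n : ℕ) (hn : 1 ≤ n)
    (c : (Fin n → ℝ) → ℝ) (u ψ β α₁ q₁ F₁ : ℝ × (Fin n → ℝ) → ℝ)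
    (hc : ContDiff ℝ (⊤ : ℕ∞) c) (hu : ContDiff ℝ (⊤ : ℕ∞) u) (hψ : ContDiff ℝ (⊤ : ℕ∞) ψ)
    (hβ : ContDiff ℝ (⊤ : ℕ∞) β) (hα₁ : ContDiff ℝ (⊤ : ℕ∞) α₁) (hq₁ : ContDiff ℝ (⊤ : ℕ∞) q₁)
    (hF₁ : ContDiff ℝ (⊤ : ℕ∞) F₁)
    (hsol : ∀ p : ℝ × (Fin n → ℝ),
      Pop α₁ q₁ c u p
        = pdt (fun p => β p * (pdt u p) ^ 2) p + F₁ p)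
    (α₂ q₂ F₂ : ℝ × (Fin n → ℝ) → ℝ)
    (hα₂ : ∀ p, α₂ p = α₁ p + 2 * β p * pdt ψ p)
    (hq₂ : ∀ p, q₂ p = q₁ p + 2 * pdt (fun p => β p * pdt ψ p) p)
    (hF₂ : ∀ p, F₂ p
      = F₁ p + pdt (pdt (pdt ψ)) p + α₁ p * pdt (pdt ψ) p - lapx (pdt ψ) p
        - (c p.2) ^ 2 * lapx ψ p + q₁ p * pdt ψ p
        + pdt (fun p => β p * (pdt ψ p) ^ 2) p) :
    ∀ p : ℝ × (Fin n → ℝ),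
      Pop α₂ q₂ c (fun p => u p + ψ p) p
        = pdt (fun p => β p * (pdt (fun p => u p + ψ p) p) ^ 2) p + F₂ p := by
  intro p
  have HU := pdt_contDiff u hu
  have HΨ := pdt_contDiff ψ hψ
  have HU2 := pdt_contDiff _ HU
  have HΨ2 := pdt_contDiff _ HΨ
  have e1 : pdt (fun p => u p + ψ p) = fun p => pdt u p + pdt ψ p := pdt_add u ψ hu hψ
  have e2 : pdt (fun p => pdt u p + pdt ψ p) = fun p => pdt (pdt u) p + pdt (pdt ψ) p :=
    pdt_add _ _ HU HΨ
  have e3 : pdt (fun p => pdt (pdt u) p + pdt (pdt ψ) p)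
      = fun p => pdt (pdt (pdt u)) p + pdt (pdt (pdt ψ)) p := pdt_add _ _ HU2 HΨ2
  have l1 : lapx (fun p => pdt u p + pdt ψ p) p = lapx (pdt u) p + lapx (pdt ψ) p :=
    lapx_add _ _ HU HΨ p
  have l2 : lapx (fun p => u p + ψ p) p = lapx u p + lapx ψ p := lapx_add u ψ hu hψ p
  have hsol' := hsol p
  have hsq_u : (fun q => β q * (pdt u q) ^ 2) = fun q => β q * (pdt u q * pdt u q) := by
    funext q; ring
  have hsq_ψ : (fun q => β q * (pdt ψ q) ^ 2) = fun q => β q * (pdt ψ q * pdt ψ q) := by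
    funext q; ring
  rw [hsq_u, pdt_mul β _ hβ (HU.mul HU) p, pdt_mul _ _ HU HU p] at hsol'
  simp only [Pop] at hsol'
  simp only [Pop, e1, e2, e3]
  rw [l1, l2, hα₂, hq₂, hF₂,
    hsq_ψ, pdt_mul β _ hβ (HΨ.mul HΨ) p, pdt_mul _ _ HΨ HΨ p,
    pdt_mul β _ hβ HΨ p]
  have hC : ContDiff ℝ (⊤ : ℕ∞) (fun q => β q * pdt ψ q * pdt u q) := (hβ.mul HΨ).mul HU
  have hfeq : (fun q => β q * (pdt u q + pdt ψ q) ^ 2)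
      = fun q => (β q * (pdt u q * pdt u q) + β q * (pdt ψ q * pdt ψ q))
        + (β q * pdt ψ q * pdt u q + β q * pdt ψ q * pdt u q) := by
    funext q; ring
  rw [hfeq,
    pdt_add' _ _ ((hβ.mul (HU.mul HU)).add (hβ.mul (HΨ.mul HΨ))) (hC.add hC) p,
    pdt_add' _ _ (hβ.mul (HU.mul HU)) (hβ.mul (HΨ.mul HΨ)) p,
    pdt_add' _ _ hC hC p,
    pdt_mul β _ hβ (HU.mul HU) p, pdt_mul β _ hβ (HΨ.mul HΨ) p,
    pdt_mul _ _ HU HU p, pdt_mul _ _ HΨ HΨ p,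
    pdt_mul _ _ (hβ.mul HΨ) HU p, pdt_mul β _ hβ HΨ p]
  linear_combination hsol'
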